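/- Let H be a factorial commutative cancellative monoid and M a submonoid of H containing every unit of H. Then every element of M that is square-free in M is square-free in H, if and only if, there exists a set B of non-unit square-free elements of H that are pairwise relatively prime in H, such that M is the submonoid of H generated by B together with all units of H. -/

import Mathlib

/-!
Factoriality enters only through two consequences: every element of `H` is primal (so `H` is a
decomposition monoid, where square-free and relatively prime elements behave as in a UFD), and
proper divisibility is well-founded.

(⇐) An element `u * b₁ * ⋯ * bₖ` of `M` with a repeated factor `bᵢ` is `bᵢ ^ 2 * c` in
`M`; otherwise it is a product of distinct pairwise coprime square-free elements, hence
square-free.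

(⇒) Take for `B` a set of representatives of the atoms of `M` up to associates; `M` is atomic, so
it is generated by `B` and the units. The key point is that if `b * x` is square-free and
`b * b * x ∈ M`, then `b, x ∈ M`: otherwise `b * b * x` is not square-free in `H`, hence equals
`d ^ 2 * c` in `M` with `d` a nonunit dividing `b`, and one recurses on `b / d`. Atoms are
square-free in `M`, hence in `H`. If two atoms `a = g * x` and `a' = g * y`, with `x`, `y`
coprime, had a nonunit common part `g`, then applying the key point to `a * a' = g ^ 2 * (x * y)`,
`a * (x * y) = x ^ 2 * (g * y)` and `a' * (x * y) = y ^ 2 * (g * x)` puts `g`, `x` and `y` in `M`,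
so irreducibility forces `x`, `y` to be units and `a`, `a'` to be associated.
-/

open Submonoid

section Squarefree

variable {H : Type*} [CancelCommMonoid H] [DecompositionMonoid H]

theorem Squarefree.dvd_of_dvd_mul_self {a d : H} (ha : Squarefree a) (h : a ∣ d * d) :
    a ∣ d := by
  obtain ⟨a₁, a₂, h₁, h₂, rfl⟩ := exists_dvd_and_dvd_of_dvd_mul h
  exact (IsRelPrime.of_squarefree_mul ha).mul_dvd h₁ h₂

theorem Squarefree.dvd_of_mul_self_dvd_mul_right {x y d : H} (hx : Squarefree x)
    (h : d * d ∣ x * y) : d ∣ y := by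
  obtain ⟨a, b, ha, hb, hab⟩ := exists_dvd_and_dvd_of_dvd_mul h
  obtain ⟨c, rfl⟩ := (hx.squarefree_of_dvd ha).dvd_of_dvd_mul_self ⟨b, hab⟩
  have hb' : b = c * (a * c) := mul_left_cancel (a := a) (by rw [← hab]; ac_rfl)
  exact (dvd_mul_left _ c).trans (hb' ▸ hb)

theorem squarefree_mul_iff' {x y : H} :
    Squarefree (x * y) ↔ IsRelPrime x y ∧ Squarefree x ∧ Squarefree y :=
  ⟨fun h ↦ ⟨.of_squarefree_mul h, h.of_mul_left, h.of_mul_right⟩,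
    fun ⟨hxy, hx, hy⟩ _ h ↦ hxy (hy.dvd_of_mul_self_dvd_mul_right (mul_comm x y ▸ h))
      (hx.dvd_of_mul_self_dvd_mul_right h)⟩

theorem Multiset.squarefree_prod_of_pairwise_isRelPrime {m : Multiset H}
    (hsf : ∀ b ∈ m, Squarefree b) (hnd : m.Nodup) (hm : {b | b ∈ m}.Pairwise IsRelPrime) :
    Squarefree m.prod := by
  induction m using Multiset.induction_on with
  | empty => simp
  | cons b t ih =>
    obtain ⟨hbt, hnd⟩ := Multiset.nodup_cons.1 hnd
    have hrel : IsRelPrime b t.prod :=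
      Multiset.prod_induction _ t (fun _ _ ↦ .mul_right) isRelPrime_one_right fun c hc ↦
        hm (Multiset.mem_cons_self b t) (Multiset.mem_cons_of_mem hc)
          (ne_of_mem_of_not_mem hc hbt).symm
    rw [Multiset.prod_cons, squarefree_mul_iff']
    exact ⟨hrel, hsf b (Multiset.mem_cons_self b t),
      ih (fun c hc ↦ hsf c (Multiset.mem_cons_of_mem hc)) hnd
        (hm.mono fun c hc ↦ Multiset.mem_cons_of_mem hc)⟩

end Squarefree

section Factorial

variable {H : Type*}

-- Mathlib's `Prime` and `DvdNotUnit` need a zero.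
def IsPrimeElement [Monoid H] (p : H) : Prop :=
  ¬ IsUnit p ∧ ∀ b c : H, p ∣ b * c → p ∣ b ∨ p ∣ c

def IsFactorial (H : Type*) [CommMonoid H] : Prop :=
  ∀ a : H, IsUnit a ∨ ∃ l : Multiset H, (∀ p ∈ l, IsPrimeElement p) ∧ l.prod = a

def ProperDvd [Monoid H] (a b : H) : Prop := ∃ c, ¬ IsUnit c ∧ b = a * c

theorem IsFactorial.induction_on [CommMonoid H] (hH : IsFactorial H) {P : H → Prop} (a : H)
    (unit : ∀ u, IsUnit u → P u) (prime_mul : ∀ p a, IsPrimeElement p → P a → P (p * a)) :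
    P a := by
  obtain hu | ⟨l, hl, rfl⟩ := hH a
  · exact unit a hu
  induction l using Multiset.induction_on with
  | empty => exact unit 1 isUnit_one
  | cons p l ih =>
    rw [Multiset.prod_cons]
    exact prime_mul p _ (hl p (Multiset.mem_cons_self p l))
      (ih fun q hq ↦ hl q (Multiset.mem_cons_of_mem hq))

theorem acc_properDvd_of_dvd [CommMonoid H] {a b : H} (ha : Acc ProperDvd a) (hba : b ∣ a) :
    Acc ProperDvd b := by
  obtain ⟨c, rfl⟩ := hba
  exact ⟨_, fun z ⟨e, he, hz⟩ ↦ ha.inv ⟨e * c, fun h ↦ he (isUnit_of_mul_isUnit_left h),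
    by rw [hz, mul_assoc]⟩⟩

variable [CancelCommMonoid H]

theorem IsPrimeElement.acc_properDvd_mul {p a : H} (hp : IsPrimeElement p)
    (ha : Acc ProperDvd a) : Acc ProperDvd (p * a) := by
  induction ha with
  | intro a ha ih =>
    refine ⟨_, fun b ⟨c, hc, hbc⟩ ↦ ?_⟩
    obtain ⟨b', rfl⟩ | ⟨c', rfl⟩ := hp.2 b c (hbc ▸ dvd_mul_right p a)
    · exact ih b' ⟨c, hc, mul_left_cancel (by rw [hbc, mul_assoc])⟩
    · exact acc_properDvd_of_dvd ⟨a, ha⟩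
        ⟨c', mul_left_cancel (a := p) (by rw [hbc]; ac_rfl)⟩

theorem IsFactorial.wellFounded_properDvd (hH : IsFactorial H) :
    WellFounded (ProperDvd (H := H)) :=
  ⟨fun a ↦ hH.induction_on a
    (fun u hu ↦ ⟨u, fun _ ⟨_, hc, h⟩ ↦
      (hc (isUnit_of_dvd_unit (Dvd.intro_left _ h.symm) hu)).elim⟩)
    fun _ _ hp ha ↦ hp.acc_properDvd_mul ha⟩

theorem IsPrimeElement.isPrimal {p : H} (hp : IsPrimeElement p) {a : H} (ha : IsPrimal a) :
    IsPrimal (p * a) := by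
  rintro b c ⟨d, hd⟩
  obtain ⟨b', rfl⟩ | ⟨c', rfl⟩ := hp.2 b c ⟨a * d, by rw [hd, mul_assoc]⟩
  · obtain ⟨a₁, a₂, h₁, h₂, rfl⟩ :=
      ha (show a ∣ b' * c from
        ⟨d, mul_left_cancel (a := p) (by rw [← mul_assoc, hd, mul_assoc])⟩)
    exact ⟨p * a₁, a₂, mul_dvd_mul_left p h₁, h₂, (mul_assoc ..).symm⟩
  · obtain ⟨a₁, a₂, h₁, h₂, rfl⟩ :=
      ha (show a ∣ b * c' from
        ⟨d, mul_left_cancel (a := p) (by rw [mul_left_comm, hd, mul_assoc])⟩)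
    exact ⟨a₁, p * a₂, h₁, mul_dvd_mul_left p h₂, mul_left_comm ..⟩

theorem IsFactorial.decompositionMonoid (hH : IsFactorial H) : DecompositionMonoid H :=
  ⟨fun a ↦ hH.induction_on a (fun _ hu ↦ hu.isPrimal) fun _ _ hp ha ↦ hp.isPrimal ha⟩

end Factorial

theorem exists_eq_mul_mul_isRelPrime {H : Type*} [CommMonoid H]
    (hwf : WellFounded (ProperDvd (H := H))) (a b : H) :
    ∃ g x y, a = g * x ∧ b = g * y ∧ IsRelPrime x y := by
  induction a using hwf.induction generalizing b with
  | _ a ih =>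
    by_cases h : IsRelPrime a b
    · exact ⟨1, a, b, (one_mul a).symm, (one_mul b).symm, h⟩
    obtain ⟨d, ⟨a₁, rfl⟩, ⟨b₁, rfl⟩, hd⟩ :
        ∃ d, d ∣ a ∧ d ∣ b ∧ ¬ IsUnit d := by
      simpa [IsRelPrime] using h
    obtain ⟨g, x, y, rfl, rfl, hxy⟩ := ih a₁ ⟨d, hd, mul_comm d a₁⟩ b₁
    exact ⟨d * g, x, y, (mul_assoc ..).symm, (mul_assoc ..).symm, hxy⟩

section Submonoid

variable {H : Type*} [CommMonoid H] (M : Submonoid H)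

def SquarefreeIn (a : H) : Prop :=
  ¬ ∃ b c : H, b ∈ M ∧ c ∈ M ∧ ¬ IsUnit b ∧ a = b ^ 2 * c

def Submonoid.atoms : Set H := {a | ∃ h : a ∈ M, Irreducible (⟨a, h⟩ : M)}

variable {M}

theorem Submonoid.isUnit_coe_iff (hunits : ∀ u : H, IsUnit u → u ∈ M) {x : M} :
    IsUnit (x : H) ↔ IsUnit x :=
  ⟨fun h ↦ .of_mul_eq_one (a := x) ⟨_, hunits _ h.unit⁻¹.isUnit⟩
    (Subtype.ext h.mul_val_inv),
    fun h ↦ h.map M.subtype⟩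

theorem Submonoid.mem_atoms_iff (hunits : ∀ u : H, IsUnit u → u ∈ M) {a : H} :
    a ∈ M.atoms ↔ a ∈ M ∧ ¬ IsUnit a ∧
      ∀ c ∈ M, ∀ d ∈ M, a = c * d → IsUnit c ∨ IsUnit d := by
  simp only [atoms, Set.mem_ofPred_eq, irreducible_iff, Subtype.forall, Subtype.ext_iff,
    Submonoid.coe_mul, ← isUnit_coe_iff hunits, exists_prop]

theorem Submonoid.squarefreeIn_of_mem_atoms {a : H} (ha : a ∈ M.atoms) : SquarefreeIn M a := by
  rintro ⟨b, c, hb, hc, hbu, rfl⟩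
  obtain ⟨_, hirr⟩ := ha
  obtain h | h := hirr.isUnit_or_isUnit (a := ⟨b, hb⟩) (b := ⟨b * c, M.mul_mem hb hc⟩)
    (Subtype.ext (by simp [sq, mul_assoc]))
  exacts [hbu (h.map M.subtype), hbu (isUnit_of_mul_isUnit_left (h.map M.subtype))]

theorem Submonoid.mem_closure_atoms (hwf : WellFounded (ProperDvd (H := H)))
    (hunits : ∀ u : H, IsUnit u → u ∈ M) {a : H} (ha : a ∈ M) :
    a ∈ closure (M.atoms ∪ {u | IsUnit u}) := by
  induction a using hwf.induction with
  | _ a ih =>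
    by_cases hu : IsUnit a
    · exact subset_closure (.inr hu)
    by_cases hat : a ∈ M.atoms
    · exact subset_closure (.inl hat)
    obtain ⟨c, hc, d, hd, rfl, hcu, hdu⟩ :
        ∃ c ∈ M, ∃ d ∈ M, a = c * d ∧ ¬ IsUnit c ∧ ¬ IsUnit d := by
      simpa [mem_atoms_iff hunits, ha, hu, not_or] using hat
    exact mul_mem (ih c ⟨d, hdu, rfl⟩ hc) (ih d ⟨c, hcu, mul_comm c d⟩ hd)

theorem Submonoid.eq_closure_of_forall_associated (hwf : WellFounded (ProperDvd (H := H)))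
    (hunits : ∀ u : H, IsUnit u → u ∈ M) {B : Set H} (hB : B ⊆ M.atoms)
    (hcover : ∀ a ∈ M.atoms, ∃ b ∈ B, Associated b a) :
    M = closure (B ∪ {u | IsUnit u}) := by
  refine le_antisymm (fun a ha ↦ closure_le.2 ?_ (mem_closure_atoms hwf hunits ha))
    (closure_le.2 ?_)
  · rintro a (ha | ha)
    · obtain ⟨b, hb, u, rfl⟩ := hcover a ha
      exact mul_mem (subset_closure (.inl hb)) (subset_closure (.inr u.isUnit))
    · exact subset_closure (.inr ha)
  · rintro a (ha | ha)
    exacts [(hB ha).1, hunits a ha]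

theorem exists_isUnit_mul_prod_of_mem_closure {B : Set H} {a : H}
    (ha : a ∈ closure (B ∪ {u | IsUnit u})) :
    ∃ u m, IsUnit u ∧ (∀ b ∈ m, b ∈ B) ∧ u * Multiset.prod m = a := by
  induction ha using closure_induction with
  | mem x hx =>
    obtain hx | hx := hx
    · exact ⟨1, {x}, isUnit_one, by simpa using hx, by simp⟩
    · exact ⟨x, 0, hx, by simp, by simp⟩
  | one => exact ⟨1, 0, isUnit_one, by simp, by simp⟩
  | mul x y _ _ ihx ihy =>
    obtain ⟨u, m, hu, hm, rfl⟩ := ihx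
    obtain ⟨v, n, hv, hn, rfl⟩ := ihy
    refine ⟨u * v, m + n, hu.mul hv, fun b hb ↦ ?_, by rw [Multiset.prod_add]; ac_rfl⟩
    exact (Multiset.mem_add.1 hb).elim (hm b) (hn b)

end Submonoid

section SquarefreeIn

variable {H : Type*} [CancelCommMonoid H] [DecompositionMonoid H] {M : Submonoid H}

theorem squarefree_of_mem_closure {B : Set H} (hB : ∀ b ∈ B, Squarefree b ∧ ¬ IsUnit b)
    (hBB : B.Pairwise IsRelPrime) {a : H} (ha : a ∈ closure (B ∪ {u | IsUnit u}))
    (hsf : SquarefreeIn (closure (B ∪ {u | IsUnit u})) a) : Squarefree a := by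
  obtain ⟨u, m, hu, hmB, rfl⟩ := exists_isUnit_mul_prod_of_mem_closure ha
  have hnd : m.Nodup := Multiset.nodup_iff_ne_cons_cons.2 fun b t hbt ↦ by
    have hb : b ∈ B := hmB b (hbt ▸ Multiset.mem_cons_self b _)
    refine hsf ⟨b, u * t.prod, subset_closure (.inl hb), mul_mem (subset_closure (.inr hu))
      (multiset_prod_mem _ _ fun c hc ↦ subset_closure (.inl (hmB c ?_))), (hB b hb).2, ?_⟩
    · simp [hbt, hc]
    · rw [hbt, Multiset.prod_cons, Multiset.prod_cons, sq]; ac_rfl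
  have hprod : Squarefree m.prod := Multiset.squarefree_prod_of_pairwise_isRelPrime
    (fun b hb ↦ (hB b (hmB b hb)).1) hnd (hBB.mono fun b hb ↦ hmB b hb)
  exact hprod.squarefree_of_dvd (hu.mul_left_dvd.2 dvd_rfl)

variable (hwf : WellFounded (ProperDvd (H := H))) (hunits : ∀ u : H, IsUnit u → u ∈ M)
  (hM : ∀ a ∈ M, SquarefreeIn M a → Squarefree a)
include hwf hunits hM

theorem mem_and_mem_of_mul_self_mul_mem {b x : H} (hbx : Squarefree (b * x))
    (h : b * b * x ∈ M) : b ∈ M ∧ x ∈ M := by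
  induction b using hwf.induction with
  | _ b ih =>
    by_cases hb : IsUnit b
    · obtain ⟨u, rfl⟩ := hb
      refine ⟨hunits _ u.isUnit, ?_⟩
      have hx : x = ↑u⁻¹ * ↑u⁻¹ * (↑u * ↑u * x) := by simp [mul_assoc]
      exact hx ▸ M.mul_mem (hunits _ (u⁻¹ * u⁻¹).isUnit) h
    obtain ⟨d, c, hdM, hcM, hd, hdc⟩ :=
      not_not.1 fun hsf : SquarefreeIn M (b * b * x) ↦ hb (hM _ h hsf b (dvd_mul_right _ x))
    obtain ⟨b₁, rfl⟩ : d ∣ b :=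
      hbx.dvd_of_mul_self_dvd_mul_right ⟨c, by rw [← sq, ← hdc]; ac_rfl⟩
    have hc : c = b₁ * b₁ * x := mul_left_cancel (a := d ^ 2) (by rw [← hdc, sq]; ac_rfl)
    obtain ⟨hb₁, hx⟩ := ih b₁ ⟨d, hd, mul_comm d b₁⟩
      (hbx.squarefree_of_dvd (mul_dvd_mul_right (dvd_mul_left b₁ d) x)) (hc ▸ hcM)
    exact ⟨M.mul_mem hdM hb₁, hx⟩

theorem isRelPrime_of_mem_atoms {a a' : H} (ha : a ∈ M.atoms) (ha' : a' ∈ M.atoms)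
    (h : ¬ Associated a a') : IsRelPrime a a' := by
  obtain ⟨haM, -, hirr⟩ := (mem_atoms_iff hunits).1 ha
  obtain ⟨ha'M, -, hirr'⟩ := (mem_atoms_iff hunits).1 ha'
  obtain ⟨g, x, y, rfl, rfl, hxy⟩ := exists_eq_mul_mul_isRelPrime hwf a a'
  by_cases hg : IsUnit g
  · exact (isRelPrime_mul_unit_left hg).2 hxy
  obtain ⟨hgx, hgsf, hx⟩ := squarefree_mul_iff'.1 (hM _ haM (squarefreeIn_of_mem_atoms ha))
  obtain ⟨hgy, -, hy⟩ := squarefree_mul_iff'.1 (hM _ ha'M (squarefreeIn_of_mem_atoms ha'))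
  have hsf : Squarefree (g * (x * y)) :=
    squarefree_mul_iff'.2 ⟨hgx.mul_right hgy, hgsf, squarefree_mul_iff'.2 ⟨hxy, hx, hy⟩⟩
  obtain ⟨hgM, hxyM⟩ := mem_and_mem_of_mul_self_mul_mem hwf hunits hM hsf
    (by convert M.mul_mem haM ha'M using 1; ac_rfl)
  have hxM : x ∈ M := (mem_and_mem_of_mul_self_mul_mem hwf hunits hM (x := g * y)
    (by convert hsf using 1; ac_rfl)
    (by convert M.mul_mem haM hxyM using 1; ac_rfl)).1
  have hyM : y ∈ M := (mem_and_mem_of_mul_self_mul_mem hwf hunits hM (x := g * x)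
    (by convert hsf using 1; ac_rfl)
    (by convert M.mul_mem ha'M hxyM using 1; ac_rfl)).1
  have hxu := (hirr g hgM x hxM rfl).resolve_left hg
  have hyu := (hirr' g hgM y hyM rfl).resolve_left hg
  exact absurd ((associated_mul_unit_right g x hxu).symm.trans
    (associated_mul_unit_right g y hyu)) h

end SquarefreeIn

theorem stmt_12 {H : Type*} [CancelCommMonoid H]
    (hfact : ∀ a : H, IsUnit a ∨ ∃ l : Multiset H, (∀ p ∈ l, ¬ IsUnit p ∧ ∀ b c : H, p ∣ b * c → p ∣ b ∨ p ∣ c) ∧ l.prod = a)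
    (M : Submonoid H) (hunits : ∀ u : H, IsUnit u → u ∈ M) :
    (∀ a ∈ M, (¬ ∃ b c : H, b ∈ M ∧ c ∈ M ∧ ¬ IsUnit b ∧ a = b ^ 2 * c) →
      Squarefree a) ↔
    (∃ B : Set H, (∀ b ∈ B, Squarefree b ∧ ¬ IsUnit b) ∧
      (∀ b ∈ B, ∀ c ∈ B, b ≠ c → IsRelPrime b c) ∧
      M = Submonoid.closure (B ∪ {u : H | IsUnit u})) := by
  have hH : IsFactorial H := hfact
  have := hH.decompositionMonoid
  have hwf := hH.wellFounded_properDvd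
  constructor
  · intro hM
    obtain ⟨B, hBA, -, hinj, hsurj⟩ := (M.atoms).exists_subset_bijOn Associates.mk
    refine ⟨B, fun b hb ↦ ⟨hM b (hBA hb).1 (squarefreeIn_of_mem_atoms (hBA hb)),
      ((mem_atoms_iff hunits).1 (hBA hb)).2.1⟩, fun b hb c hc hbc ↦ ?_,
      eq_closure_of_forall_associated hwf hunits hBA fun a ha ↦ ?_⟩
    · exact isRelPrime_of_mem_atoms hwf hunits hM (hBA hb) (hBA hc)
        fun h ↦ hbc (hinj hb hc (Associates.mk_eq_mk_iff_associated.2 h))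
    · obtain ⟨b, hb, hba⟩ := hsurj ⟨a, ha, rfl⟩
      exact ⟨b, hb, Associates.mk_eq_mk_iff_associated.1 hba⟩
  · rintro ⟨B, hB, hBB, rfl⟩ a ha
    exact squarefree_of_mem_closure hB hBB ha
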